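/- For every isotropic vector \beta in (F_3)^4 with respect to q(x) = x_1^2 - x_2^2 - x_3^2 - x_4^2, and every orthogonal basis \alpha_0,\alpha_1,\alpha_2,\alpha_3 of (F_3)^4 with q(\alpha_0) = -1 and q(\alpha_i) = 1 for i=1,2,3 (values in F_3: q(\alpha_0)=2, q(\alpha_i)=1), \beta is orthogonal to \alpha_i for at least one i in {0,1,2,3}. -/
import Mathlib


/-- The quadratic form `q(x) = x₁² - x₂² - x₃² - x₄²` on `(F₃)⁴`. -/
def qF3 (v : Fin 4 → ZMod 3) : ZMod 3 :=
  v 0 ^ 2 - v 1 ^ 2 - v 2 ^ 2 - v 3 ^ 2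

/-- The associated bilinear form `b(x,y) = 2(x₁y₁ - x₂y₂ - x₃y₃ - x₄y₄)`. -/
def bF3 (x y : Fin 4 → ZMod 3) : ZMod 3 :=
  2 * (x 0 * y 0 - x 1 * y 1 - x 2 * y 2 - x 3 * y 3)

/-- For every orthogonal basis `α₀, α₁, α₂, α₃` of `(F₃)⁴` with
`q(α₀) = 2 (= -1)` and `q(αᵢ) = 1` for `i = 1,2,3`, every isotropic vector
`β` (i.e. `q(β) = 0`) is orthogonal to at least one `αᵢ`. -/
theorem isotropic_orthogonal_to_basis_vector
    (α : Fin 4 → Fin 4 → ZMod 3)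
    (hbasis : LinearIndependent (ZMod 3) α)
    (horth : ∀ i j, i ≠ j → bF3 (α i) (α j) = 0)
    (h0 : qF3 (α 0) = 2)
    (h1 : ∀ i, i ≠ 0 → qF3 (α i) = 1)
    (β : Fin 4 → ZMod 3) (hβ : qF3 β = 0) :
    ∃ i, bF3 β (α i) = 0 := by
  by_contra hcon
  push_neg at hcon
  have hcard : Fintype.card (Fin 4) = Module.finrank (ZMod 3) (Fin 4 → ZMod 3) := by
    rw [Module.finrank_fintype_fun_eq_card]
  let B := basisOfLinearIndependentOfCardEqFinrank hbasis hcard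
  have hB : ⇑B = α := coe_basisOfLinearIndependentOfCardEqFinrank hbasis hcard
  set c : Fin 4 → ZMod 3 := fun i => B.repr β i with hc
  have hsum : ∑ i, c i • α i = β := by
    rw [← hB]; exact B.sum_repr β
  have hβk : ∀ k, β k = c 0 * α 0 k + c 1 * α 1 k + c 2 * α 2 k + c 3 * α 3 k := by
    intro k
    rw [← hsum]
    simp [Fin.sum_univ_four]
  -- name the orthogonality hypotheses
  have e01 := horth 0 1 (by decide)
  have e02 := horth 0 2 (by decide)
  have e03 := horth 0 3 (by decide)
  have e12 := horth 1 2 (by decide)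
  have e13 := horth 1 3 (by decide)
  have e23 := horth 2 3 (by decide)
  have h11 := h1 1 (by decide)
  have h12 := h1 2 (by decide)
  have h13 := h1 3 (by decide)
  simp only [qF3, bF3] at hβ h0 h11 h12 h13 e01 e02 e03 e12 e13 e23
  have hb0 := hcon 0
  have hb1 := hcon 1
  have hb2 := hcon 2
  have hb3 := hcon 3
  simp only [bF3, hβk] at hb0 hb1 hb2 hb3
  have hc0 : c 0 ≠ 0 := by
    intro h
    apply hb0
    rw [h]
    linear_combination c 1 * e01 + c 2 * e02 + c 3 * e03
  have hc1 : c 1 ≠ 0 := by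
    intro h
    apply hb1
    rw [h]
    linear_combination c 0 * e01 + c 2 * e12 + c 3 * e13
  have hc2 : c 2 ≠ 0 := by
    intro h
    apply hb2
    rw [h]
    linear_combination c 0 * e02 + c 1 * e12 + c 3 * e23
  have hc3 : c 3 ≠ 0 := by
    intro h
    apply hb3
    rw [h]
    linear_combination c 0 * e03 + c 1 * e13 + c 2 * e23
  have key : 4 * c 0 ^ 2 + 2 * c 1 ^ 2 + 2 * c 2 ^ 2 + 2 * c 3 ^ 2 = 0 := by
    have hβ' : β 0 ^ 2 - β 1 ^ 2 - β 2 ^ 2 - β 3 ^ 2 = 0 := hβ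
    rw [hβk 0, hβk 1, hβk 2, hβk 3] at hβ'
    linear_combination 2 * hβ' - 2 * (c 0 ^ 2) * h0 - 2 * (c 1 ^ 2) * h11
      - 2 * (c 2 ^ 2) * h12 - 2 * (c 3 ^ 2) * h13
      - 2 * (c 0 * c 1) * e01 - 2 * (c 0 * c 2) * e02 - 2 * (c 0 * c 3) * e03
      - 2 * (c 1 * c 2) * e12 - 2 * (c 1 * c 3) * e13 - 2 * (c 2 * c 3) * e23
  have hsq : ∀ x : ZMod 3, x ≠ 0 → x ^ 2 = 1 := by decide
  rw [hsq _ hc0, hsq _ hc1, hsq _ hc2, hsq _ hc3] at key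
  exact absurd key (by decide)
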